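/- In a two-player finite discounted stochastic game, a bi-policy π is a coordination equilibrium (a Nash equilibrium at which every player additionally attains at each state the maximum of their own Q-function over all pure joint actions) if and only if (B_{π|a_1} − B_π) D_π r_1 ≤ 0 for all a_1 ∈ A_1, (B_{π|a_2} − B_π) D_π r_2 ≤ 0 for all a_2 ∈ A_2, and (B_π − B_a) D_π r_i ≥ 0 for each player i and every pure joint action a ∈ A_1 × A_2. -/

import Mathlib

/-!
Write `M = 1 - γ G_π` and `V_i = M⁻¹ B_π r_i`, so that `Q_i = r_i + γ P V_i = D_π r_i`. Since
`G_π = B_π P` is row-stochastic and `γ < 1`, `M` is strictly diagonally dominant, hence invertible,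
and the push-through identity `B_π D_π = M⁻¹ B_π` gives `V_i = B_π Q_i`. Thus
`(X - Y) D_π r_i = X Q_i - Y Q_i`, and for `X, Y` among `B_π`, `B_{π|a_i}`, `B_a` these are the
differences between the averages of `Q_i` under `π`, under a unilateral pure deviation and at a
pure joint action: both sides of the equivalence list the same inequalities.
-/

open Matrix BigOperators

namespace Matrix

variable {m n R : Type*} [Fintype m] [Fintype n] [DecidableEq m] [DecidableEq n]

theorem det_one_sub_smul_ne_zero_of_mem_rowStochastic {G : Matrix n n ℝ}
    (hG : G ∈ rowStochastic ℝ n) {γ : ℝ} (hγ : |γ| < 1) : (1 - γ • G).det ≠ 0 := by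
  refine det_ne_zero_of_sum_row_lt_diag fun k => ?_
  have hGkk : 0 ≤ G k k := nonneg_of_mem_rowStochastic hG
  have hoff : ∀ j ∈ Finset.univ.erase k, ‖(1 - γ • G) k j‖ = |γ| * G k j := fun j hj => by
    simp [one_apply_ne' (Finset.ne_of_mem_erase hj),
      abs_of_nonneg (nonneg_of_mem_rowStochastic hG)]
  have hdiag : 1 - |γ| * G k k ≤ ‖(1 - γ • G) k k‖ := by
    simpa [abs_mul, abs_of_nonneg hGkk] using abs_sub_abs_le_abs_sub 1 (γ * G k k)
  rw [Finset.sum_congr rfl hoff, ← Finset.mul_sum, Finset.sum_erase_eq_sub (Finset.mem_univ k),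
    sum_row_of_mem_rowStochastic hG]
  nlinarith [abs_nonneg γ, le_one_of_mem_rowStochastic hG (i := k) (j := k)]

theorem mul_one_add_smul_mul_nonsing_inv_mul [CommRing R] (B : Matrix m n R) (P : Matrix n m R)
    (γ : R) (h : IsUnit (1 - γ • (B * P)).det) :
    B * (1 + γ • (P * (1 - γ • (B * P))⁻¹ * B)) = (1 - γ • (B * P))⁻¹ * B := by
  generalize hM : 1 - γ • (B * P) = M at h ⊢
  have hBP : γ • (B * P) = 1 - M := by rw [← hM, sub_sub_cancel]
  calc B * (1 + γ • (P * M⁻¹ * B)) = B + (γ • (B * P)) * M⁻¹ * B := by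
        simp only [Matrix.mul_add, Matrix.mul_one, Matrix.mul_smul, Matrix.smul_mul,
          Matrix.mul_assoc]
    _ = M⁻¹ * B := by
        rw [hBP, Matrix.sub_mul, Matrix.sub_mul, Matrix.one_mul, mul_nonsing_inv M h,
          Matrix.one_mul]
        abel

end Matrix

namespace StochasticGame

variable {S A1 A2 : Type*} [Fintype S] [DecidableEq S]

/- The matrices `B_π`, `B_{π|a_1}`, `B_{π|a_2}` and `B_a` of the paper, acting on functions of
the state–action pair `(s, a_1, a_2)`. -/

def jointPolicyMatrix (π1 : S → A1 → ℝ) (π2 : S → A2 → ℝ) : Matrix S (S × A1 × A2) ℝ :=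
  of fun s x => if x.1 = s then π1 s x.2.1 * π2 s x.2.2 else 0

def deviationMatrix₁ [DecidableEq A1] (π2 : S → A2 → ℝ) (a1 : A1) : Matrix S (S × A1 × A2) ℝ :=
  of fun s x => if x.1 = s ∧ x.2.1 = a1 then π2 s x.2.2 else 0

def deviationMatrix₂ [DecidableEq A2] (π1 : S → A1 → ℝ) (a2 : A2) : Matrix S (S × A1 × A2) ℝ :=
  of fun s x => if x.1 = s ∧ x.2.2 = a2 then π1 s x.2.1 else 0

def pureActionMatrix [DecidableEq A1] [DecidableEq A2] (a : A1 × A2) :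
    Matrix S (S × A1 × A2) ℝ :=
  of fun s x => if x = (s, a.1, a.2) then 1 else 0

variable [Fintype A1] [Fintype A2]

theorem jointPolicyMatrix_mulVec_apply (π1 : S → A1 → ℝ) (π2 : S → A2 → ℝ)
    (f : S × A1 × A2 → ℝ) (s : S) :
    (jointPolicyMatrix π1 π2 *ᵥ f) s = ∑ a1, ∑ a2, π1 s a1 * π2 s a2 * f (s, a1, a2) := by
  simp [jointPolicyMatrix, mulVec, dotProduct, Fintype.sum_prod_type, ite_mul]

theorem deviationMatrix₁_mulVec_apply [DecidableEq A1] (π2 : S → A2 → ℝ) (a1 : A1)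
    (f : S × A1 × A2 → ℝ) (s : S) :
    (deviationMatrix₁ π2 a1 *ᵥ f) s = ∑ a2, π2 s a2 * f (s, a1, a2) := by
  simp [deviationMatrix₁, mulVec, dotProduct, Fintype.sum_prod_type, ite_mul, ite_and]

theorem deviationMatrix₂_mulVec_apply [DecidableEq A2] (π1 : S → A1 → ℝ) (a2 : A2)
    (f : S × A1 × A2 → ℝ) (s : S) :
    (deviationMatrix₂ π1 a2 *ᵥ f) s = ∑ a1, π1 s a1 * f (s, a1, a2) := by
  simp [deviationMatrix₂, mulVec, dotProduct, Fintype.sum_prod_type, ite_mul, ite_and]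

theorem pureActionMatrix_mulVec_apply [DecidableEq A1] [DecidableEq A2] (a : A1 × A2)
    (f : S × A1 × A2 → ℝ) (s : S) : (pureActionMatrix a *ᵥ f) s = f (s, a.1, a.2) := by
  simp [pureActionMatrix, mulVec, dotProduct, Fintype.sum_prod_type, ite_mul, Prod.ext_iff,
    ite_and]

theorem jointPolicyMatrix_mul_mem_rowStochastic {π1 : S → A1 → ℝ} {π2 : S → A2 → ℝ}
    (hπ10 : ∀ s a, 0 ≤ π1 s a) (hπ11 : ∀ s, ∑ a, π1 s a = 1)
    (hπ20 : ∀ s a, 0 ≤ π2 s a) (hπ21 : ∀ s, ∑ a, π2 s a = 1)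
    {P : Matrix (S × A1 × A2) S ℝ} (hP0 : ∀ x s, 0 ≤ P x s) (hP1 : ∀ x, ∑ s, P x s = 1) :
    jointPolicyMatrix π1 π2 * P ∈ rowStochastic ℝ S := by
  have hP : P *ᵥ 1 = 1 := funext fun x => by simp [mulVec, dotProduct, hP1]
  refine mem_rowStochastic.2 ⟨fun s s' => ?_, ?_⟩
  · change 0 ≤ (jointPolicyMatrix π1 π2 *ᵥ fun x => P x s') s
    rw [jointPolicyMatrix_mulVec_apply]
    exact Finset.sum_nonneg fun a1 _ => Finset.sum_nonneg fun a2 _ =>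
      mul_nonneg (mul_nonneg (hπ10 s a1) (hπ20 s a2)) (hP0 _ _)
  · refine funext fun s => ?_
    rw [← mulVec_mulVec, hP, jointPolicyMatrix_mulVec_apply]
    simp [← Finset.mul_sum, hπ11, hπ21]

end StochasticGame

open StochasticGame

/-- In a two-player finite discounted stochastic game, a
bi-policy `π` is a coordination equilibrium (a Nash equilibrium at which every
player additionally attains at each state the maximum of their own Q-function
over all pure joint actions) if and only if `(B_{π|a_1} − B_π) D_π r_1 ≤ 0` for
all `a_1`, `(B_{π|a_2} − B_π) D_π r_2 ≤ 0` for all `a_2`, and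
`(B_π − B_a) D_π r_i ≥ 0` for each player `i` and every pure joint action `a`. -/
theorem stmt6 {S A1 A2 : Type*} [Fintype S] [Fintype A1] [Fintype A2]
    [DecidableEq S] [DecidableEq A1] [DecidableEq A2]
    (γ : ℝ) (hγ0 : 0 ≤ γ) (hγ1 : γ < 1)
    (p : S × A1 × A2 → S → ℝ)
    (hp0 : ∀ sa s', 0 ≤ p sa s') (hp1 : ∀ sa, ∑ s', p sa s' = 1)
    (π1 : S → A1 → ℝ) (π2 : S → A2 → ℝ)
    (hπ10 : ∀ s a, 0 ≤ π1 s a) (hπ11 : ∀ s, ∑ a, π1 s a = 1)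
    (hπ20 : ∀ s a, 0 ≤ π2 s a) (hπ21 : ∀ s, ∑ a, π2 s a = 1)
    (r1 r2 : S × A1 × A2 → ℝ)
    (Gπ : Matrix S S ℝ)
    (hG : Gπ = Matrix.of fun s s' => ∑ a1, ∑ a2, π1 s a1 * π2 s a2 * p (s, a1, a2) s')
    (Bπ : Matrix S (S × A1 × A2) ℝ)
    (hB : Bπ = Matrix.of fun s x => if x.1 = s then π1 s x.2.1 * π2 s x.2.2 else 0)
    (Bπa1 : A1 → Matrix S (S × A1 × A2) ℝ)
    (hBa1 : ∀ a1, Bπa1 a1 =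
      Matrix.of fun s x => if x.1 = s ∧ x.2.1 = a1 then π2 s x.2.2 else 0)
    (Bπa2 : A2 → Matrix S (S × A1 × A2) ℝ)
    (hBa2 : ∀ a2, Bπa2 a2 =
      Matrix.of fun s x => if x.1 = s ∧ x.2.2 = a2 then π1 s x.2.1 else 0)
    (Ba : A1 × A2 → Matrix S (S × A1 × A2) ℝ)
    (hBa : ∀ a, Ba a = Matrix.of fun s x => if x = (s, a.1, a.2) then 1 else 0)
    (P : Matrix (S × A1 × A2) S ℝ)
    (hP : P = Matrix.of fun sa s' => p sa s')
    (V1 V2 : S → ℝ)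
    (hV1 : V1 = (1 - γ • Gπ)⁻¹ *ᵥ (Bπ *ᵥ r1))
    (hV2 : V2 = (1 - γ • Gπ)⁻¹ *ᵥ (Bπ *ᵥ r2))
    (Q1 Q2 : S × A1 × A2 → ℝ)
    (hQ1 : ∀ sa, Q1 sa = r1 sa + γ * ∑ s', p sa s' * V1 s')
    (hQ2 : ∀ sa, Q2 sa = r2 sa + γ * ∑ s', p sa s' * V2 s')
    (Dπ : Matrix (S × A1 × A2) (S × A1 × A2) ℝ)
    (hD : Dπ = 1 + γ • (P * (1 - γ • Gπ)⁻¹ * Bπ)) :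
    ((∀ s : S, ∀ a2 : A2, ∑ a1, π1 s a1 * Q2 (s, a1, a2) ≤ V2 s) ∧
     (∀ s : S, ∀ a1 : A1, ∑ a2, π2 s a2 * Q1 (s, a1, a2) ≤ V1 s) ∧
     (∀ s : S, ∀ a : A1 × A2,
        Q1 (s, a.1, a.2) ≤ ∑ b1, ∑ b2, π1 s b1 * π2 s b2 * Q1 (s, b1, b2)) ∧
     (∀ s : S, ∀ a : A1 × A2,
        Q2 (s, a.1, a.2) ≤ ∑ b1, ∑ b2, π1 s b1 * π2 s b2 * Q2 (s, b1, b2)))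
      ↔
    ((∀ a1 : A1, ∀ s : S, (((Bπa1 a1 - Bπ) * Dπ) *ᵥ r1) s ≤ 0) ∧
     (∀ a2 : A2, ∀ s : S, (((Bπa2 a2 - Bπ) * Dπ) *ᵥ r2) s ≤ 0) ∧
     (∀ a : A1 × A2, ∀ s : S, 0 ≤ (((Bπ - Ba a) * Dπ) *ᵥ r1) s) ∧
     (∀ a : A1 × A2, ∀ s : S, 0 ≤ (((Bπ - Ba a) * Dπ) *ᵥ r2) s)) := by

  obtain rfl : Bπ = jointPolicyMatrix π1 π2 := hB
  obtain rfl : Bπa1 = deviationMatrix₁ π2 := funext hBa1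
  obtain rfl : Bπa2 = deviationMatrix₂ π1 := funext hBa2
  obtain rfl : Ba = pureActionMatrix := funext hBa
  subst hP
  obtain rfl : Gπ = jointPolicyMatrix π1 π2 * of p := by
    rw [hG]; ext s s'; exact (jointPolicyMatrix_mulVec_apply π1 π2 (fun x => p x s') s).symm
  have hunit : IsUnit (1 - γ • (jointPolicyMatrix π1 π2 * of p)).det :=
    (det_one_sub_smul_ne_zero_of_mem_rowStochastic
      (jointPolicyMatrix_mul_mem_rowStochastic hπ10 hπ11 hπ20 hπ21 hp0 hp1)
      (abs_lt.2 ⟨by linarith, hγ1⟩)).isUnit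
  have hQV : ∀ {r Q : S × A1 × A2 → ℝ} {V : S → ℝ},
      V = (1 - γ • (jointPolicyMatrix π1 π2 * of p))⁻¹ *ᵥ (jointPolicyMatrix π1 π2 *ᵥ r) →
      (∀ sa, Q sa = r sa + γ * ∑ s', p sa s' * V s') →
      Q = Dπ *ᵥ r ∧ V = jointPolicyMatrix π1 π2 *ᵥ (Dπ *ᵥ r) := by
    intro r Q V hV hQ
    constructor
    · rw [hD, add_mulVec, one_mulVec, smul_mulVec, ← mulVec_mulVec, ← mulVec_mulVec, ← hV]
      exact funext fun sa => by simp [hQ, mulVec, dotProduct]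
    · rw [hV, hD, mulVec_mulVec, mulVec_mulVec, mul_one_add_smul_mul_nonsing_inv_mul _ _ _ hunit]
  obtain ⟨rfl, rfl⟩ := hQV hV1 hQ1
  obtain ⟨rfl, rfl⟩ := hQV hV2 hQ2
  simp only [Matrix.sub_mul, sub_mulVec, ← mulVec_mulVec, Pi.sub_apply, sub_nonpos, sub_nonneg,
    jointPolicyMatrix_mulVec_apply, deviationMatrix₁_mulVec_apply,
    deviationMatrix₂_mulVec_apply, pureActionMatrix_mulVec_apply]
  rw [forall_comm (α := S), forall_comm (α := S), forall_comm (α := S), forall_comm (α := S)]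
  exact and_left_comm
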